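/- arXiv:1411.7210 — 3 statements merged into one kernel-verified Lean document; each statement's English description precedes it below -/
import Mathlib

section
/- Every atomic attacker process is maximal among Dolev-Yao processes: for any atomic DY process p with nonce set N and any output event (a':f':m') that p can emit upon receiving event (a:f:m) in state s, the attacker process with the same nonce set and with s recorded in its state can also emit an event with message m' (to any receiver address, from any of its sender addresses). -/
inductive Term (Nonce : Type) : Type where
  | const : String → Term Nonce
  | nonce : Nonce → Term Nonce
  | tru : Term Nonce
  | bot : Term Nonce
  | undef : Term Nonce
  | pub : Term Nonce → Term Nonce
  | enc : Term Nonce → Term Nonce → Term Nonce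
  | dec : Term Nonce → Term Nonce → Term Nonce
  | encs : Term Nonce → Term Nonce → Term Nonce
  | decs : Term Nonce → Term Nonce → Term Nonce
  | sig : Term Nonce → Term Nonce → Term Nonce
  | checksig : Term Nonce → Term Nonce → Term Nonce
  | unsig : Term Nonce → Term Nonce
  | seq : List (Term Nonce) → Term Nonce
  | proj : Nat → Term Nonce → Term Nonce

namespace Term

variable {Nonce : Type}

/-- The congruence on terms induced by the Dolev-Yao equational theory. -/
inductive Equiv : Term Nonce → Term Nonce → Prop where
  | refl (t : Term Nonce) : Equiv t t
  | symm : Equiv s t → Equiv t s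
  | trans : Equiv s t → Equiv t u → Equiv s u
  | pubCongr : Equiv s t → Equiv (Term.pub s) (Term.pub t)
  | encCongr : Equiv s₁ t₁ → Equiv s₂ t₂ → Equiv (Term.enc s₁ s₂) (Term.enc t₁ t₂)
  | decCongr : Equiv s₁ t₁ → Equiv s₂ t₂ → Equiv (Term.dec s₁ s₂) (Term.dec t₁ t₂)
  | encsCongr : Equiv s₁ t₁ → Equiv s₂ t₂ → Equiv (Term.encs s₁ s₂) (Term.encs t₁ t₂)
  | decsCongr : Equiv s₁ t₁ → Equiv s₂ t₂ → Equiv (Term.decs s₁ s₂) (Term.decs t₁ t₂)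
  | sigCongr : Equiv s₁ t₁ → Equiv s₂ t₂ → Equiv (Term.sig s₁ s₂) (Term.sig t₁ t₂)
  | checksigCongr : Equiv s₁ t₁ → Equiv s₂ t₂ → Equiv (Term.checksig s₁ s₂) (Term.checksig t₁ t₂)
  | unsigCongr : Equiv s t → Equiv (Term.unsig s) (Term.unsig t)
  | projCongr (i : Nat) : Equiv s t → Equiv (Term.proj i s) (Term.proj i t)
  | seqCongr (l l' : List (Term Nonce)) : l.length = l'.length →
      (∀ i, Equiv (l.getD i Term.undef) (l'.getD i Term.undef)) →
      Equiv (Term.seq l) (Term.seq l')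
  | decEnc (x y : Term Nonce) : Equiv (Term.dec (Term.enc x (Term.pub y)) y) x
  | decsEncs (x y : Term Nonce) : Equiv (Term.decs (Term.encs x y) y) x
  | unsigSig (x y : Term Nonce) : Equiv (Term.unsig (Term.sig x y)) x
  | checksigSig (x y : Term Nonce) : Equiv (Term.checksig (Term.sig x y) (Term.pub y)) Term.tru
  | projSeq (l : List (Term Nonce)) (i : Nat) : 1 ≤ i → i ≤ l.length →
      Equiv (Term.proj i (Term.seq l)) (l.getD (i - 1) Term.undef)
  | projSeqOut (l : List (Term Nonce)) (j : Nat) : (j < 1 ∨ l.length < j) →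
      Equiv (Term.proj j (Term.seq l)) Term.undef
  | projNonSeq (t : Term Nonce) (j : Nat) : (∀ l : List (Term Nonce), t ≠ Term.seq l) →
      Equiv (Term.proj j t) Term.undef

/-- Dolev-Yao derivability: `Derivable N M t` iff `t ≡ τ[m₁/x₁,…,mₙ/xₙ]` for some
messages `m₁,…,mₙ ∈ M` and a term `τ` over `Σ ∪ N`. -/
inductive Derivable (N : Set Nonce) (M : Set (Term Nonce)) : Term Nonce → Prop where
  | ofMem : t ∈ M → Derivable N M t
  | ofNonce : n ∈ N → Derivable N M (Term.nonce n)
  | ofConst (s : String) : Derivable N M (Term.const s)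
  | ofTru : Derivable N M Term.tru
  | ofBot : Derivable N M Term.bot
  | ofUndef : Derivable N M Term.undef
  | ofPub : Derivable N M t → Derivable N M (Term.pub t)
  | ofEnc : Derivable N M t → Derivable N M u → Derivable N M (Term.enc t u)
  | ofDec : Derivable N M t → Derivable N M u → Derivable N M (Term.dec t u)
  | ofEncs : Derivable N M t → Derivable N M u → Derivable N M (Term.encs t u)
  | ofDecs : Derivable N M t → Derivable N M u → Derivable N M (Term.decs t u)
  | ofSig : Derivable N M t → Derivable N M u → Derivable N M (Term.sig t u)
  | ofChecksig : Derivable N M t → Derivable N M u → Derivable N M (Term.checksig t u)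
  | ofUnsig : Derivable N M t → Derivable N M (Term.unsig t)
  | ofSeq (l : List (Term Nonce)) : (∀ t ∈ l, Derivable N M t) → Derivable N M (Term.seq l)
  | ofProj (i : Nat) : Derivable N M t → Derivable N M (Term.proj i t)
  | ofEquiv : Derivable N M t → Equiv t t' → Derivable N M t'

/-- The set `d_N(M)` of messages derivable from `M` with nonces `N`. -/
def dN (N : Set Nonce) (M : Set (Term Nonce)) : Set (Term Nonce) := {t | Derivable N M t}

/-- Syntactic subterm relation. -/
inductive Subterm : Term Nonce → Term Nonce → Prop where
  | refl (t : Term Nonce) : Subterm t t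
  | pub : Subterm s t → Subterm s (Term.pub t)
  | encL : Subterm s t → Subterm s (Term.enc t u)
  | encR : Subterm s u → Subterm s (Term.enc t u)
  | decL : Subterm s t → Subterm s (Term.dec t u)
  | decR : Subterm s u → Subterm s (Term.dec t u)
  | encsL : Subterm s t → Subterm s (Term.encs t u)
  | encsR : Subterm s u → Subterm s (Term.encs t u)
  | decsL : Subterm s t → Subterm s (Term.decs t u)
  | decsR : Subterm s u → Subterm s (Term.decs t u)
  | sigL : Subterm s t → Subterm s (Term.sig t u)
  | sigR : Subterm s u → Subterm s (Term.sig t u)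
  | checksigL : Subterm s t → Subterm s (Term.checksig t u)
  | checksigR : Subterm s u → Subterm s (Term.checksig t u)
  | unsig : Subterm s t → Subterm s (Term.unsig t)
  | proj (i : Nat) : Subterm s t → Subterm s (Term.proj i t)
  | seq (l : List (Term Nonce)) (t : Term Nonce) : t ∈ l → Subterm s t → Subterm s (Term.seq l)

/-- `k` is contained in `t` modulo the equational theory
(some term equivalent to `t` has `k` as a syntactic subterm). -/
def ContainsSome (k t : Term Nonce) : Prop := ∃ t', Equiv t' t ∧ Subterm k t'

/-- `k` is contained in `t` modulo the equational theory
(every term equivalent to `t` has `k` as a syntactic subterm). -/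
def ContainsAll (k t : Term Nonce) : Prop := ∀ t', Equiv t' t → Subterm k t'

end Term

/-- An event `(a : f : m)` with receiver address `a`, sender address `f` and message `m`.
Addresses are constants (modeled as strings). -/
structure Event (Nonce : Type) where
  dst : String
  src : String
  msg : Term Nonce

/-- The defining property of an atomic Dolev-Yao process with nonce set `N`:
every output event's message and the new state are derivable from the input
event's message and the current state. -/
def IsDY {Nonce : Type} (N : Set Nonce)
    (R : Event Nonce → Term Nonce → Set (Event Nonce) → Term Nonce → Prop) : Prop :=
  ∀ e s E s', R e s E s' →
    s' ∈ Term.dN N {e.msg, s} ∧ ∀ e' ∈ E, e'.msg ∈ Term.dN N {e.msg, s}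

/-- The attacker process for sender addresses `A` and nonce set `N`: it records the
incoming event together with its current state, and outputs every event whose sender
address is in `A` and whose message is derivable from the input message and state. -/
def attackerRel {Nonce : Type} (A : Set String) (N : Set Nonce) :
    Event Nonce → Term Nonce → Set (Event Nonce) → Term Nonce → Prop :=
  fun e s E s' =>
    s' = Term.seq [Term.seq [Term.const e.dst, Term.const e.src, e.msg], s] ∧
    E = {e' | e'.src ∈ A ∧ e'.msg ∈ Term.dN N {e.msg, s}}

/-- Every atomic attacker process is maximal among DY processes: whatever message `m'`
a DY process `p` (with nonce set `N`) can emit upon receiving event `(a:f:m)` in state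
`s`, the attacker process with the same nonce set and with `s` recorded in its state
can also emit `m'` (to any receiver address, from any of its sender addresses). -/
theorem stmt6 {Nonce : Type} (N : Set Nonce)
    (R : Event Nonce → Term Nonce → Set (Event Nonce) → Term Nonce → Prop)
    (hDY : IsDY N R)
    (a f : String) (m s : Term Nonce) (E : Set (Event Nonce)) (s' : Term Nonce)
    (hR : R ⟨a, f, m⟩ s E s')
    (a' f' : String) (m' : Term Nonce) (hE : (⟨a', f', m'⟩ : Event Nonce) ∈ E)
    (A : Set String) (E' : Set (Event Nonce)) (s'' : Term Nonce)
    (hAtt : attackerRel A N ⟨a, f, m⟩ s E' s'') :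
    ∀ a'' : String, ∀ f'' ∈ A, (⟨a'', f'', m'⟩ : Event Nonce) ∈ E' := by
  intro a'' f'' hf
  obtain ⟨_, hE'⟩ := hAtt
  subst hE'
  exact ⟨hf, (hDY _ _ _ _ hR).2 ⟨a', f', m'⟩ hE⟩
end

section
/- States reached by an atomic DY process during a run are derivable from its history: in any run of a system containing an atomic DY process p, the state of p at every configuration is derivable (with p's nonces) from p's initial state together with the multiset of messages delivered to p so far. Formally, by induction on the run: if S_i(p) = s and event (a:f:m) with a ∈ I^p is delivered to p yielding S_{i+1}(p) = s', then s' ∈ d_{N^p}({m, s}), and hence S_n(p) ∈ d_{N^p}({s₀^p} ∪ {messages delivered to p in steps involving p up to n}). -/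
theorem derivable_cut {Nonce : Type} {N : Set Nonce} {M M' : Set (Term Nonce)}
    {t : Term Nonce} (h : Term.Derivable N M t) (hM : ∀ m ∈ M, Term.Derivable N M' m) :
    Term.Derivable N M' t := by
  induction h with
  | ofMem h => exact hM _ h
  | ofNonce h => exact .ofNonce h
  | ofConst s => exact .ofConst s
  | ofTru => exact .ofTru
  | ofBot => exact .ofBot
  | ofUndef => exact .ofUndef
  | ofPub _ ih => exact .ofPub ih
  | ofEnc _ _ ih1 ih2 => exact .ofEnc ih1 ih2
  | ofDec _ _ ih1 ih2 => exact .ofDec ih1 ih2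
  | ofEncs _ _ ih1 ih2 => exact .ofEncs ih1 ih2
  | ofDecs _ _ ih1 ih2 => exact .ofDecs ih1 ih2
  | ofSig _ _ ih1 ih2 => exact .ofSig ih1 ih2
  | ofChecksig _ _ ih1 ih2 => exact .ofChecksig ih1 ih2
  | ofUnsig _ ih => exact .ofUnsig ih
  | ofSeq l _ ih => exact .ofSeq l ih
  | ofProj i _ ih => exact .ofProj i ih
  | ofEquiv _ heq ih => exact .ofEquiv ih heq

theorem derivable_mono {Nonce : Type} {N : Set Nonce} {M M' : Set (Term Nonce)}
    {t : Term Nonce} (h : Term.Derivable N M t) (hMM : M ⊆ M') :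
    Term.Derivable N M' t :=
  derivable_cut h (fun m hm => .ofMem (hMM hm))

/-- States reached by an atomic DY process during a run are derivable from its history:
each new state is derivable from the delivered message and the previous state, and
hence the state after `n` delivered events is derivable from the initial state together
with the messages delivered so far. -/
theorem stmt14 {Nonce : Type} (N : Set Nonce)
    (R : Event Nonce → Term Nonce → Set (Event Nonce) → Term Nonce → Prop)
    (hDY : IsDY N R) (s₀ : Term Nonce)
    (evs : Nat → Event Nonce) (st : Nat → Term Nonce) (out : Nat → Set (Event Nonce))
    (h0 : st 0 = s₀)
    (hstep : ∀ i, R (evs i) (st i) (out i) (st (i + 1))) :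
    (∀ i, st (i + 1) ∈ Term.dN N {(evs i).msg, st i}) ∧
    ∀ n, st n ∈ Term.dN N ({s₀} ∪ {m | ∃ i < n, m = (evs i).msg}) := by
  have hstep' : ∀ i, st (i + 1) ∈ Term.dN N {(evs i).msg, st i} :=
    fun i => (hDY _ _ _ _ (hstep i)).1
  refine ⟨hstep', ?_⟩
  intro n
  induction n with
  | zero =>
      exact .ofMem (Or.inl (by simp [h0]))
  | succ n ih =>
      have h1 := hstep' n
      refine derivable_cut h1 ?_
      intro m hm
      rcases hm with hm | hm
      · exact .ofMem (Or.inr ⟨n, Nat.lt_succ_self n, hm⟩)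
      · simp only [Set.mem_singleton_iff] at hm
        subst hm
        refine derivable_mono ih ?_
        rintro x (hx | ⟨i, hi, hx⟩)
        · exact Or.inl hx
        · exact Or.inr ⟨i, Nat.lt_succ_of_lt hi, hx⟩
end

section
/- Subterm-freeness is preserved under single-step derivation with fresh nonces for free constructors: if no message in M contains the nonce k as a subterm (modulo the equational theory) and k ∉ N, then no message in d_N(M) contains k as a subterm modulo the equational theory. -/
open Term in
private lemma seq_witness {Nonce : Type} (k : Nonce) :
    ∀ l : List (Term Nonce),
      (∀ t ∈ l, ∃ t', Equiv t' t ∧ ¬ Subterm (Term.nonce k) t') →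
    ∃ l' : List (Term Nonce), l'.length = l.length ∧
      (∀ i, Equiv (l'.getD i Term.undef) (l.getD i Term.undef)) ∧
      ∀ t ∈ l', ¬ Subterm (Term.nonce k) t := by
  intro l
  induction l with
  | nil => exact fun _ => ⟨[], rfl, fun i => Term.Equiv.refl _, by simp⟩
  | cons a l ih =>
    intro h
    obtain ⟨a', ha1, ha2⟩ := h a (by simp)
    obtain ⟨l', hl1, hl2, hl3⟩ := ih (fun t ht => h t (by simp [ht]))
    refine ⟨a' :: l', by simp [hl1], ?_, ?_⟩
    · intro i
      cases i with
      | zero => exact ha1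
      | succ n => exact hl2 n
    · intro t ht
      rcases List.mem_cons.mp ht with h1 | h1
      · subst h1; exact ha2
      · exact hl3 t h1

open Term in
private lemma key_witness {Nonce : Type} (k : Nonce) (N : Set Nonce) (M : Set (Term Nonce))
    (hM : ∀ m ∈ M, ¬ ContainsAll (Term.nonce k) m) (hk : k ∉ N) :
    ∀ m, Derivable N M m → ∃ t', Equiv t' m ∧ ¬ Subterm (Term.nonce k) t' := by
  intro m hm
  induction hm with
  | ofMem h =>
    have := hM _ h
    simp only [ContainsAll, not_forall, Classical.not_imp] at this
    obtain ⟨t', ht'⟩ := this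
    exact ⟨t', ht'.1, ht'.2⟩
  | ofNonce hn =>
    exact ⟨_, Term.Equiv.refl _, by intro h; cases h; exact hk hn⟩
  | ofConst s => exact ⟨_, Term.Equiv.refl _, by intro h; cases h⟩
  | ofTru => exact ⟨_, Term.Equiv.refl _, by intro h; cases h⟩
  | ofBot => exact ⟨_, Term.Equiv.refl _, by intro h; cases h⟩
  | ofUndef => exact ⟨_, Term.Equiv.refl _, by intro h; cases h⟩
  | ofPub _ ih =>
    obtain ⟨t', h1, h2⟩ := ih
    exact ⟨Term.pub t', Equiv.pubCongr h1, by intro h; cases h with | pub h => exact h2 h⟩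
  | ofEnc _ _ ih1 ih2 =>
    obtain ⟨t', h1, h2⟩ := ih1
    obtain ⟨u', h3, h4⟩ := ih2
    exact ⟨Term.enc t' u', Equiv.encCongr h1 h3, by
      intro h
      cases h with
      | encL h => exact h2 h
      | encR h => exact h4 h⟩
  | ofDec _ _ ih1 ih2 =>
    obtain ⟨t', h1, h2⟩ := ih1
    obtain ⟨u', h3, h4⟩ := ih2
    exact ⟨Term.dec t' u', Equiv.decCongr h1 h3, by
      intro h
      cases h with
      | decL h => exact h2 h
      | decR h => exact h4 h⟩
  | ofEncs _ _ ih1 ih2 =>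
    obtain ⟨t', h1, h2⟩ := ih1
    obtain ⟨u', h3, h4⟩ := ih2
    exact ⟨Term.encs t' u', Equiv.encsCongr h1 h3, by
      intro h
      cases h with
      | encsL h => exact h2 h
      | encsR h => exact h4 h⟩
  | ofDecs _ _ ih1 ih2 =>
    obtain ⟨t', h1, h2⟩ := ih1
    obtain ⟨u', h3, h4⟩ := ih2
    exact ⟨Term.decs t' u', Equiv.decsCongr h1 h3, by
      intro h
      cases h with
      | decsL h => exact h2 h
      | decsR h => exact h4 h⟩
  | ofSig _ _ ih1 ih2 =>
    obtain ⟨t', h1, h2⟩ := ih1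
    obtain ⟨u', h3, h4⟩ := ih2
    exact ⟨Term.sig t' u', Equiv.sigCongr h1 h3, by
      intro h
      cases h with
      | sigL h => exact h2 h
      | sigR h => exact h4 h⟩
  | ofChecksig _ _ ih1 ih2 =>
    obtain ⟨t', h1, h2⟩ := ih1
    obtain ⟨u', h3, h4⟩ := ih2
    exact ⟨Term.checksig t' u', Equiv.checksigCongr h1 h3, by
      intro h
      cases h with
      | checksigL h => exact h2 h
      | checksigR h => exact h4 h⟩
  | ofUnsig _ ih =>
    obtain ⟨t', h1, h2⟩ := ih
    exact ⟨Term.unsig t', Equiv.unsigCongr h1, by intro h; cases h with | unsig h => exact h2 h⟩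
  | ofSeq l _ ih =>
    obtain ⟨l', hl1, hl2, hl3⟩ := seq_witness k l ih
    exact ⟨Term.seq l', Equiv.seqCongr l' l hl1 hl2, by
      intro h
      cases h with
      | seq _ t ht hst => exact hl3 t ht hst⟩
  | ofProj i _ ih =>
    obtain ⟨t', h1, h2⟩ := ih
    exact ⟨Term.proj i t', Equiv.projCongr i h1, by
      intro h; cases h with | proj _ h => exact h2 h⟩
  | ofEquiv _ heq ih =>
    obtain ⟨t', h1, h2⟩ := ih
    exact ⟨t', Term.Equiv.trans h1 heq, h2⟩

open Term in
/-- Subterm-freeness of a fresh nonce is preserved under derivation: if no message in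
`M` contains the nonce `k` as a subterm modulo the equational theory and `k ∉ N`, then
no message derivable from `M` with nonces `N` contains `k` as a subterm modulo the
equational theory. -/
theorem stmt19 {Nonce : Type} (k : Nonce) (N : Set Nonce) (M : Set (Term Nonce))
    (hM : ∀ m ∈ M, ¬ ContainsAll (Term.nonce k) m) (hk : k ∉ N) :
    ∀ m ∈ dN N M, ¬ ContainsAll (Term.nonce k) m := by
  intro m hm hC
  obtain ⟨t', h1, h2⟩ := key_witness k N M hM hk m hm
  exact h2 (hC t' h1)
end
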